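/- arXiv:1909.02308 — 2 statements merged into one kernel-verified Lean document; each statement's English description precedes it below -/
import Mathlib

section
/- Let F_n be the directed bipartite graph on A_n ∪ B_n with arcs a_i → b_j for i ≤ j and b_j → a_i for j < i, all of capacity 1. For any bipartite graph G on (A_n, B_n), orienting the edges of the symmetric difference G △ H_0(n) according to F_n yields an admissible integer flow in F_n in which each vertex a_i is a source of (deg_G(a_i) − deg_{H_0(n)}(a_i))⁻ units and a sink of (deg_G(a_i) − deg_{H_0(n)}(a_i))⁺ units, and symmetrically (with signs exchanged) for b_i; conversely every such flow arises from exactly one such G. In particular, for a degree sequence d with ‖d − h_0(n)‖₁ = 2k and equal degree sums on both sides, G ↦ ∇⃗(G) is a bijection between realizations of d and integer k-flows on F_n with the prescribed sources and sinks. -/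
/-- Degree on the `A`-side of a bipartite graph on `Fin n × Fin n` given by
`E : Fin n → Fin n → Bool` (`E i j` means `a_i ~ b_j`). -/
def degA {n : ℕ} (E : Fin n → Fin n → Bool) (i : Fin n) : ℕ :=
  (Finset.univ.filter fun j => E i j = true).card

/-- Degree on the `B`-side. -/
def degB {n : ℕ} (E : Fin n → Fin n → Bool) (j : Fin n) : ℕ :=
  (Finset.univ.filter fun i => E i j = true).card

/-- `E` realizes the bipartite degree sequence `(dA; dB)`. -/
def Realizes {n : ℕ} (E : Fin n → Fin n → Bool) (dA dB : Fin n → ℕ) : Prop :=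
  (∀ i, degA E i = dA i) ∧ (∀ j, degB E j = dB j)

/-- The flow representation of `G`: the symmetric difference with the
half-graph `H₀(n)` (edge `a_i b_j` of `H₀(n)` iff `i ≤ j`), oriented
`a_i → b_j` when `i ≤ j` and `b_j → a_i` when `j < i`. -/
def flowRep {n : ℕ} (E : Fin n → Fin n → Bool) : Fin n → Fin n → Bool :=
  fun i j => xor (E i j) (decide (i.val ≤ j.val))

open Finset

lemma flowRep_invol {n : ℕ} (E : Fin n → Fin n → Bool) : flowRep (flowRep E) = E := by
  funext i j
  simp [flowRep, Bool.xor_assoc]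

lemma card_le_filter {n : ℕ} (i : Fin n) :
    ((univ.filter fun j : Fin n => i.val ≤ j.val).card : ℤ) = (n : ℤ) - i.val := by
  have h : (univ.filter fun j : Fin n => i.val ≤ j.val) = Finset.Ici i := by
    ext j
    simp only [mem_filter, mem_univ, true_and, Finset.mem_Ici, Fin.le_def]
  rw [h, Fin.card_Ici]
  have := i.is_lt
  omega

lemma card_ge_filter {n : ℕ} (j : Fin n) :
    ((univ.filter fun i : Fin n => i.val ≤ j.val).card : ℤ) = (j : ℕ) + 1 := by
  have h : (univ.filter fun i : Fin n => i.val ≤ j.val) = Finset.Iic j := by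
    ext i
    simp only [mem_filter, mem_univ, true_and, Finset.mem_Iic, Fin.le_def]
  rw [h, Fin.card_Iic]
  push_cast; ring

lemma keyA {n : ℕ} (E : Fin n → Fin n → Bool) (i : Fin n) :
    ((univ.filter fun j : Fin n => i.val ≤ j.val ∧ flowRep E i j = true).card : ℤ) -
      ((univ.filter fun j : Fin n => j.val < i.val ∧ flowRep E i j = true).card : ℤ) =
    ((n : ℤ) - (i : ℕ)) - (degA E i : ℤ) := by
  rw [← card_le_filter i]
  rw [degA]
  rw [card_filter, card_filter, card_filter, card_filter]
  push_cast
  rw [← Finset.sum_sub_distrib, ← Finset.sum_sub_distrib]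
  apply Finset.sum_congr rfl
  intro j _
  rcases le_or_gt i.val j.val with h | h <;>
    [have h' := not_lt.mpr h; have h' := not_le.mpr h] <;>
    cases hE : E i j <;>
    simp [flowRep, Fin.le_def, Fin.lt_def, h, h', hE]

lemma keyB {n : ℕ} (E : Fin n → Fin n → Bool) (j : Fin n) :
    ((univ.filter fun i : Fin n => j.val < i.val ∧ flowRep E i j = true).card : ℤ) -
      ((univ.filter fun i : Fin n => i.val ≤ j.val ∧ flowRep E i j = true).card : ℤ) =
    (degB E j : ℤ) - ((j : ℕ) + 1) := by
  rw [← card_ge_filter j]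
  rw [degB]
  rw [card_filter, card_filter, card_filter, card_filter]
  push_cast
  rw [← Finset.sum_sub_distrib, ← Finset.sum_sub_distrib]
  apply Finset.sum_congr rfl
  intro i _
  rcases le_or_gt i.val j.val with h | h <;>
    [have h' := not_lt.mpr h; have h' := not_le.mpr h] <;>
    cases hE : E i j <;>
    simp [flowRep, Fin.le_def, Fin.lt_def, h, h', hE]

/-- For a degree sequence `d = (dA; dB)` with `‖d - h₀(n)‖₁ = 2k` and equal
degree sums, `G ↦ ∇⃗(G)` is a bijection between realizations of `d` and
admissible integer flows on `Fₙ` whose excess `δ - ϱ` at each `a_i` is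
`(n-i) - dA i` and at each `b_j` is `dB j - (j+1)` (so each vertex is a source
of the negative part and a sink of the positive part of `deg_G - deg_{H₀}`);
moreover these flows are `k`-flows: the total amount injected at sources
is `k`. -/
theorem stmt_10 (n k : ℕ) (dA dB : Fin n → ℕ)
    (hdist : (∑ i : Fin n, |(dA i : ℤ) - ((n : ℤ) - (i : ℕ))|) +
      (∑ j : Fin n, |(dB j : ℤ) - ((j : ℕ) + 1)|) = 2 * k)
    (hsum : (∑ i, dA i) = ∑ j, dB j) :
    Set.BijOn (fun E : Fin n → Fin n → Bool => flowRep E)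
      {E | Realizes E dA dB}
      {X | (∀ i : Fin n,
          ((Finset.univ.filter fun j : Fin n =>
              i.val ≤ j.val ∧ X i j = true).card : ℤ) -
            ((Finset.univ.filter fun j : Fin n =>
              j.val < i.val ∧ X i j = true).card : ℤ) =
          ((n : ℤ) - (i : ℕ)) - (dA i : ℤ)) ∧
        (∀ j : Fin n,
          ((Finset.univ.filter fun i : Fin n =>
              j.val < i.val ∧ X i j = true).card : ℤ) -
            ((Finset.univ.filter fun i : Fin n =>
              i.val ≤ j.val ∧ X i j = true).card : ℤ) =
          (dB j : ℤ) - ((j : ℕ) + 1))} ∧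
    (∑ i : Fin n, max (((n : ℤ) - (i : ℕ)) - (dA i : ℤ)) 0) +
      (∑ j : Fin n, max ((dB j : ℤ) - ((j : ℕ) + 1)) 0) = k := by
  constructor
  · refine ⟨?_, ?_, ?_⟩
    · -- MapsTo
      rintro E ⟨hA, hB⟩
      constructor
      · intro i; rw [keyA E i, hA i]
      · intro j; rw [keyB E j, hB j]
    · -- InjOn
      intro E _ E' _ h
      have := congrArg flowRep h
      simpa [flowRep_invol] using this
    · -- SurjOn
      rintro X ⟨hA, hB⟩
      refine ⟨flowRep X, ⟨?_, ?_⟩, flowRep_invol X⟩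
      · intro i
        have h1 := keyA (flowRep X) i
        rw [flowRep_invol] at h1
        have h2 := hA i
        have : ((n : ℤ) - (i : ℕ)) - (degA (flowRep X) i : ℤ) =
            ((n : ℤ) - (i : ℕ)) - (dA i : ℤ) := by rw [← h1, h2]
        omega
      · intro j
        have h1 := keyB (flowRep X) j
        rw [flowRep_invol] at h1
        have h2 := hB j
        have : (degB (flowRep X) j : ℤ) - ((j : ℕ) + 1) =
            (dB j : ℤ) - ((j : ℕ) + 1) := by rw [← h1, h2]
        omega
  · -- the k part
    set eA : Fin n → ℤ := fun i => ((n : ℤ) - (i : ℕ)) - (dA i : ℤ) with heA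
    set eB : Fin n → ℤ := fun j => (dB j : ℤ) - ((j : ℕ) + 1) with heB
    have hrev : (∑ i : Fin n, ((n : ℤ) - (i : ℕ))) = ∑ j : Fin n, ((j : ℕ) + 1 : ℤ) := by
      rw [Fin.sum_univ_eq_sum_range (fun i => ((n : ℤ) - i)),
        Fin.sum_univ_eq_sum_range (fun j => ((j : ℕ) + 1 : ℤ)),
        ← Finset.sum_range_reflect]
      apply Finset.sum_congr rfl
      intro j hj
      simp only [Finset.mem_range] at hj
      omega
    have hzero : (∑ i, eA i) + ∑ j, eB j = 0 := by
      have : (∑ i, eA i) + ∑ j, eB j =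
          ((∑ i : Fin n, ((n : ℤ) - (i : ℕ))) - ∑ j : Fin n, ((j : ℕ) + 1 : ℤ)) +
          ((∑ j, (dB j : ℤ)) - ∑ i, (dA i : ℤ)) := by
        simp only [heA, heB, Finset.sum_sub_distrib]
        ring
      rw [this, hrev]
      have : (∑ j, (dB j : ℤ)) = ∑ i, (dA i : ℤ) := by
        rw_mod_cast [hsum]
      rw [this]; ring
    have habs : ∀ t : ℤ, 2 * max t 0 = |t| + t := by
      intro t
      rcases le_total t 0 with h | h
      · rw [max_eq_right h, abs_of_nonpos h]; ring
      · rw [max_eq_left h, abs_of_nonneg h]; ring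
    have h2 : 2 * ((∑ i, max (eA i) 0) + ∑ j, max (eB j) 0) = 2 * k := by
      rw [mul_add, Finset.mul_sum, Finset.mul_sum]
      simp only [habs]
      rw [Finset.sum_add_distrib, Finset.sum_add_distrib]
      have hA' : ∀ i, |eA i| = |(dA i : ℤ) - ((n : ℤ) - (i : ℕ))| := by
        intro i; rw [heA]; exact abs_sub_comm _ _
      have hB' : ∀ j, |eB j| = |(dB j : ℤ) - ((j : ℕ) + 1)| := fun j => rfl
      simp only [hA']
      linarith [hdist, hzero]
    simp only [heA, heB] at h2
    omega
end

section
/- The class of degree sequences H_0 = {h_0(n) : n ∈ ℕ} is not P-stable: h_0(n) has exactly one realization, but h_0(n) − 𝟙_{a_1} − 𝟙_{b_n} has Θ(((1+√5)/2)^{2n}) realizations, which is superpolynomial in n. -/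
/-- The number of bipartite realizations of the degree sequence `(dA; dB)`. -/
noncomputable def countReal (n : ℕ) (dA dB : Fin n → ℕ) : ℕ :=
  Set.ncard {E : Fin n → Fin n → Bool |
    (∀ i, degA E i = dA i) ∧ (∀ j, degB E j = dB j)}

/-- `A`-side of the half-graph degree sequence `h₀(n)` (0-indexed). -/
def h0dA (n : ℕ) : Fin n → ℕ := fun i => n - (i : ℕ)

/-- `B`-side of `h₀(n)` (0-indexed). -/
def h0dB (n : ℕ) : Fin n → ℕ := fun j => (j : ℕ) + 1

/-- `A`-side of `h₀(n) - 𝟙_{a₁} - 𝟙_{b_n}` (0-indexed). -/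
def h1dA (n : ℕ) : Fin n → ℕ := fun i => if (i : ℕ) = 0 then n - 1 else n - (i : ℕ)

/-- `B`-side of `h₀(n) - 𝟙_{a₁} - 𝟙_{b_n}` (0-indexed). -/
def h1dB (n : ℕ) : Fin n → ℕ := fun j => if (j : ℕ) = n - 1 then n - 1 else (j : ℕ) + 1

/-!
Write a realization `E` as the half graph `H` plus a defect `E - H`, which is negative only on
cells `i ≤ j` and positive only on cells `i > j`. If all rows and columns of index `≥ k` keep
their `h₀`-degrees, the defect vanishes on them: going down from `k = n`, column `k` is forced by
its degree, and then row `k`. With `k = 0` this makes `H` the only realization of `h₀`.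

For `h₀ - 𝟙_{a₁} - 𝟙_{b_m}` (count `P m`) the column `b_m` misses exactly one cell `a_r`, `r ≤ m`;
filling it gives a realization of `h₀ - 𝟙_{a₁} + 𝟙_{a_r}` (count `Q r`), whose row `a_r` has exactly
one extra cell `b_c`, `c < r`, and emptying that cell leads back to `h₀ - 𝟙_{a₁} - 𝟙_{b_c}`. Hence
`P m = ∑_{r ≤ m} Q r` and `Q r = ∑_{c < r} P c` (with `Q 0 = 1`), the recursion with matrix
`[[2,1],[1,1]]`, so `P m = F_{2m+1}`. By Binet's formula `F_{2n-1}` lies within constant factors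
of `φ^{2n}`, which outgrows every polynomial.
-/

open Finset

def halfGraph (n : ℕ) : Fin n → Fin n → Bool := fun i j => decide (i ≤ j)

section Realizations

variable {n : ℕ}

def realizations (n : ℕ) (dA dB : Fin n → ℕ) : Finset (Fin n → Fin n → Bool) :=
  univ.filter fun E => (∀ i, degA E i = dA i) ∧ ∀ j, degB E j = dB j

theorem countReal_eq_card_realizations (dA dB : Fin n → ℕ) :
    countReal n dA dB = #(realizations n dA dB) := by
  rw [countReal, realizations, ← Set.ncard_coe_finset, coe_filter_univ]

theorem degA_halfGraph (i : Fin n) : degA (halfGraph n) i = n - i := by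
  rw [← Fin.card_Ici, degA]
  congr 1; ext; simp [halfGraph]

theorem degB_halfGraph (j : Fin n) : degB (halfGraph n) j = j + 1 := by
  rw [← Fin.card_Iic, degB]
  congr 1; ext; simp [halfGraph]

theorem eq_true_of_degB_eq {E : Fin n → Fin n → Bool} {j : Fin n}
    (hlow : ∀ i, j < i → E i j = false) (hdeg : degB E j = j + 1) {i : Fin n} (hij : i ≤ j) :
    E i j = true := by
  have hsub : univ.filter (E · j = true) ⊆ Iic j := fun i hi => by
    by_contra h
    simp_all
  have hi : i ∈ Iic j := mem_Iic.mpr hij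
  rw [← eq_of_subset_of_card_le hsub (by rw [Fin.card_Iic, ← hdeg]; rfl)] at hi
  simpa using hi

theorem eq_false_of_degA_eq {E : Fin n → Fin n → Bool} {i : Fin n}
    (hhigh : ∀ j, i ≤ j → E i j = true) (hdeg : degA E i = n - i) {j : Fin n} (hji : j < i) :
    E i j = false := by
  have hsub : Ici i ⊆ univ.filter (E i · = true) := fun j hj => by simp_all
  rw [← Bool.not_eq_true]
  intro hj
  have hj : j ∈ univ.filter (E i · = true) := by simpa using hj
  rw [← eq_of_subset_of_card_le hsub (by rw [Fin.card_Ici, ← hdeg]; rfl), mem_Ici] at hj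
  exact absurd hj (not_le.mpr hji)

theorem eq_halfGraph_of_degrees {E : Fin n → Fin n → Bool} (k : ℕ)
    (hA : ∀ i : Fin n, k ≤ i → degA E i = n - i) (hB : ∀ j : Fin n, k ≤ j → degB E j = j + 1)
    (i j : Fin n) (hij : k ≤ i ∨ k ≤ j) : E i j = halfGraph n i j := by
  induction h : n - k generalizing k i j with
  | zero => omega
  | succ d ih =>
    have agree : ∀ i j : Fin n, (k < i ∨ k < j) → E i j = halfGraph n i j := fun i j hij =>
      ih (k + 1) (fun i hi => hA i (by omega)) (fun j hj => hB j (by omega)) i j hij (by omega)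
    set K : Fin n := ⟨k, by omega⟩
    have col : ∀ i, i ≤ K → E i K = true := fun i hi =>
      eq_true_of_degB_eq
        (fun i hi => by simpa [halfGraph, not_le.mpr hi] using agree i K (Or.inl hi))
        (hB K le_rfl) hi
    have row : ∀ j, j < K → E K j = false := fun j hj =>
      eq_false_of_degA_eq (fun j hj => by
          rcases hj.lt_or_eq with hj | rfl
          · simpa [halfGraph, hj.le] using agree K j (Or.inr hj)
          · exact col K le_rfl)
        (hA K le_rfl) hj
    by_cases hlt : k < i ∨ k < j
    · exact agree i j hlt
    · obtain rfl | rfl : i = K ∨ j = K := by simp only [Fin.ext_iff, K]; omega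
      · rcases lt_or_ge j K with hj | hj
        · simpa [halfGraph, not_le.mpr hj] using row j hj
        · obtain rfl : j = K := by simp only [Fin.ext_iff, K] at hj hlt ⊢; omega
          simpa [halfGraph] using col _ le_rfl
      · have hi : i ≤ K := by simp only [Fin.le_def, K] at hlt ⊢; omega
        simpa [halfGraph, hi] using col i hi

theorem realizations_h0 : realizations n (h0dA n) (h0dB n) = {halfGraph n} := by
  ext E
  simp only [realizations, mem_filter, mem_univ, true_and, mem_singleton]
  constructor
  · rintro ⟨hA, hB⟩
    funext i j
    exact eq_halfGraph_of_degrees 0 (fun i _ => hA i) (fun j _ => hB j) i j (by omega)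
  · rintro rfl
    exact ⟨degA_halfGraph, degB_halfGraph⟩

def setCell (E : Fin n → Fin n → Bool) (a b : Fin n) (v : Bool) : Fin n → Fin n → Bool :=
  fun i j => if i = a ∧ j = b then v else E i j

theorem setCell_setCell (E : Fin n → Fin n → Bool) (a b : Fin n) (v w : Bool) :
    setCell (setCell E a b v) a b w = setCell E a b w := by
  funext i j; by_cases h : i = a ∧ j = b <;> simp [setCell, h]

theorem setCell_self {E : Fin n → Fin n → Bool} {a b : Fin n} {v : Bool} (h : E a b = v) :
    setCell E a b v = E := by
  funext i j; by_cases h' : i = a ∧ j = b <;> simp_all [setCell]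

theorem card_filter_true_eq_add_one_of_flip {f g : Fin n → Bool} {b : Fin n} (hf : f b = false)
    (hg : g b = true) (hfg : ∀ j ≠ b, g j = f j) :
    #(univ.filter (g · = true)) = #(univ.filter (f · = true)) + 1 := by
  have : univ.filter (g · = true) = insert b (univ.filter (f · = true)) := by
    ext j; by_cases hj : j = b <;> simp_all
  rw [this, card_insert_of_notMem (by simp [hf])]

theorem degA_setCell_true {E : Fin n → Fin n → Bool} {a b : Fin n} (h : E a b = false)
    (i : Fin n) : degA (setCell E a b true) i = degA E i + (Pi.single a 1 : Fin n → ℕ) i := by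
  by_cases hi : i = a
  · subst hi
    refine (card_filter_true_eq_add_one_of_flip h (by simp [setCell]) ?_).trans (by simp [degA])
    intro j hj; simp [setCell, hj]
  · simp [degA, setCell, hi]

theorem degB_setCell_true {E : Fin n → Fin n → Bool} {a b : Fin n} (h : E a b = false)
    (j : Fin n) : degB (setCell E a b true) j = degB E j + (Pi.single b 1 : Fin n → ℕ) j := by
  by_cases hj : j = b
  · subst hj
    refine (card_filter_true_eq_add_one_of_flip (f := (E · j)) (g := (setCell E a j true · j)) h
      (by simp [setCell]) ?_).trans (by simp [degB])
    intro i hi; simp [setCell, hi]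
  · simp [degB, setCell, hj]

theorem card_filter_false_eq_card_filter_true (dA dB : Fin n → ℕ) (a b : Fin n) :
    #((realizations n dA dB).filter (· a b = false)) =
      #((realizations n (dA + Pi.single a 1) (dB + Pi.single b 1)).filter (· a b = true)) := by
  refine card_nbij' (setCell · a b true) (setCell · a b false) ?_ ?_ ?_ ?_
  · intro E hE
    simp only [realizations, mem_coe, mem_filter, mem_univ, true_and] at hE ⊢
    obtain ⟨⟨hA, hB⟩, hab⟩ := hE
    refine ⟨⟨fun i => ?_, fun j => ?_⟩, by simp [setCell]⟩
    · rw [degA_setCell_true hab, hA]; rfl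
    · rw [degB_setCell_true hab, hB]; rfl
  · intro E hE
    simp only [realizations, mem_coe, mem_filter, mem_univ, true_and] at hE ⊢
    obtain ⟨⟨hA, hB⟩, hab⟩ := hE
    have hE' : setCell (setCell E a b false) a b true = E := by
      rw [setCell_setCell, setCell_self hab]
    have hfalse : setCell E a b false a b = false := by simp [setCell]
    refine ⟨⟨fun i => ?_, fun j => ?_⟩, hfalse⟩
    · have := degA_setCell_true hfalse i
      rw [hE', hA, Pi.add_apply] at this
      omega
    · have := degB_setCell_true hfalse j
      rw [hE', hB, Pi.add_apply] at this
      omega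
  · intro E hE
    simp only [mem_coe, mem_filter] at hE
    exact (setCell_setCell E a b _ _).trans (setCell_self hE.2)
  · intro E hE
    simp only [mem_coe, mem_filter] at hE
    exact (setCell_setCell E a b _ _).trans (setCell_self hE.2)

end Realizations

theorem card_eq_sum_card_filter_of_card_filter_eq_one {α β : Type*}
    {s : Finset α} {t : Finset β} {p : α → β → Prop} [∀ a b, Decidable (p a b)]
    (h : ∀ a ∈ s, #(t.filter (p a)) = 1) : #s = ∑ b ∈ t, #(s.filter (p · b)) := by
  calc #s = ∑ a ∈ s, #(t.bipartiteAbove p a) :=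
        (card_eq_sum_ones s).trans (sum_congr rfl fun a ha => (h a ha).symm)
    _ = _ := sum_card_bipartiteAbove_eq_sum_card_bipartiteBelow p

section AlternatingPaths

variable {n : ℕ}

def colDefectB (n : ℕ) (m : Fin n) : Fin n → ℕ := fun j => if (j : ℕ) = m then m else j + 1

/-- Realizations of `h₀ - 𝟙_{a₁} - 𝟙_{b_m}` (0-indexed): they differ from the half graph along an
alternating path from `b_m` down to `a₁`. -/
def colPaths (n : ℕ) (m : Fin n) : Finset (Fin n → Fin n → Bool) :=
  realizations n (h1dA n) (colDefectB n m)

/-- Realizations of `h₀ - 𝟙_{a₁} + 𝟙_{a_r}` (0-indexed): they differ from the half graph along an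
alternating path from `a_r` down to `a₁`. -/
def rowPaths (n : ℕ) (r : Fin n) : Finset (Fin n → Fin n → Bool) :=
  realizations n (h1dA n + Pi.single r 1) (h0dB n)

theorem colDefectB_add_single (m : Fin n) : colDefectB n m + Pi.single m 1 = h0dB n := by
  funext j
  by_cases hj : j = m <;> simp [colDefectB, h0dB, hj, Fin.val_ne_iff]

theorem h1dA_add_single_of_val_eq_zero {r : Fin n} (hr : (r : ℕ) = 0) :
    h1dA n + Pi.single r 1 = h0dA n := by
  funext i
  by_cases hi : i = r
  · subst hi; simp [h1dA, h0dA, hr]; omega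
  · have : (i : ℕ) ≠ 0 := fun h => hi (Fin.ext (h.trans hr.symm))
    simp [h1dA, h0dA, hi, this]

theorem eq_halfGraph_of_mem_colPaths {m : Fin n} {E : Fin n → Fin n → Bool}
    (hE : E ∈ colPaths n m) (i j : Fin n) (hij : m < i ∨ m < j) : E i j = halfGraph n i j := by
  simp only [colPaths, realizations, mem_filter, mem_univ, true_and] at hE
  refine eq_halfGraph_of_degrees (m + 1) (fun i hi => ?_) (fun j hj => ?_) i j
    (by simp only [Fin.lt_def] at hij; omega)
  · rw [hE.1]; simp [h1dA]; omega
  · rw [hE.2]; simp [colDefectB]; omega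

theorem card_filter_eq_false_of_mem_colPaths {m : Fin n} {E : Fin n → Fin n → Bool}
    (hE : E ∈ colPaths n m) : #((Iic m).filter (E · m = false)) = 1 := by
  have hdeg : degB E m = m := by
    simp only [colPaths, realizations, mem_filter, mem_univ, true_and] at hE
    simp [hE.2, colDefectB]
  have hcol : univ.filter (E · m = true) = (Iic m).filter (E · m = true) := by
    ext i
    by_cases hi : i ≤ m
    · simp [hi]
    · simpa [hi, halfGraph] using eq_halfGraph_of_mem_colPaths hE i m (Or.inl (not_le.mp hi))
  have := card_filter_add_card_filter_not (s := Iic m) (E · m = true)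
  rw [← hcol, Fin.card_Iic] at this
  simp only [Bool.not_eq_true] at this
  rw [degB] at hdeg
  omega

theorem eq_true_of_mem_rowPaths {r : Fin n} {E : Fin n → Fin n → Bool}
    (hE : E ∈ rowPaths n r) {j : Fin n} (hj : r ≤ j) : E r j = true := by
  simp only [rowPaths, realizations, mem_filter, mem_univ, true_and] at hE
  have agree : ∀ i j : Fin n, (r < i ∨ r < j) → E i j = halfGraph n i j := fun i j hij =>
    eq_halfGraph_of_degrees (r + 1)
      (fun i hi => by
        have : i ≠ r := fun h => by subst h; omega
        rw [hE.1]; simp [h1dA, this]; omega)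
      (fun j _ => hE.2 j) i j (by simp only [Fin.lt_def] at hij; omega)
  rcases hj.lt_or_eq with hj | rfl
  · simpa [halfGraph, hj.le] using agree r j (Or.inr hj)
  · exact eq_true_of_degB_eq
      (fun i hi => by simpa [halfGraph, not_le.mpr hi] using agree i r (Or.inl hi)) (hE.2 r) le_rfl

theorem card_filter_eq_true_of_mem_rowPaths {r : Fin n} (hr : (r : ℕ) ≠ 0)
    {E : Fin n → Fin n → Bool} (hE : E ∈ rowPaths n r) :
    #((Iio r).filter (E r · = true)) = 1 := by
  have hdeg : degA E r = n - r + 1 := by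
    simp only [rowPaths, realizations, mem_filter, mem_univ, true_and] at hE
    simp [hE.1, h1dA, hr]
  have hrow : univ.filter (E r · = true) = Ici r ∪ (Iio r).filter (E r · = true) := by
    ext j
    by_cases hj : r ≤ j
    · simp [hj, eq_true_of_mem_rowPaths hE hj]
    · simp [hj, not_le.mp hj]
  rw [degA, hrow, card_union_of_disjoint, Fin.card_Ici] at hdeg
  · omega
  · exact disjoint_left.mpr fun j hj hj' =>
      not_le.mpr (mem_Iio.mp (mem_filter.mp hj').1) (mem_Ici.mp hj)

theorem card_colPaths (m : Fin n) : #(colPaths n m) = ∑ r ∈ Iic m, #(rowPaths n r) := by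
  rw [card_eq_sum_card_filter_of_card_filter_eq_one fun E hE =>
    card_filter_eq_false_of_mem_colPaths hE]
  refine sum_congr rfl fun r hr => ?_
  rw [colPaths, card_filter_false_eq_card_filter_true, colDefectB_add_single, ← rowPaths,
    filter_true_of_mem fun E hE => eq_true_of_mem_rowPaths hE (mem_Iic.mp hr)]

theorem card_rowPaths {r : Fin n} (hr : (r : ℕ) ≠ 0) :
    #(rowPaths n r) = ∑ c ∈ Iio r, #(colPaths n c) := by
  rw [card_eq_sum_card_filter_of_card_filter_eq_one fun E hE =>
    card_filter_eq_true_of_mem_rowPaths hr hE]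
  refine sum_congr rfl fun c hc => ?_
  have hfalse : ∀ E ∈ colPaths n c, E r c = false := fun E hE => by
    simpa [halfGraph, not_le.mpr (mem_Iio.mp hc)] using
      eq_halfGraph_of_mem_colPaths hE r c (Or.inl (mem_Iio.mp hc))
  rw [← filter_true_of_mem hfalse, colPaths, card_filter_false_eq_card_filter_true,
    colDefectB_add_single, ← rowPaths]

theorem card_rowPaths_of_val_eq_zero {r : Fin n} (hr : (r : ℕ) = 0) : #(rowPaths n r) = 1 := by
  rw [rowPaths, h1dA_add_single_of_val_eq_zero hr, realizations_h0, card_singleton]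

end AlternatingPaths

open Nat in
theorem fib_two_mul_eq_sum (r : ℕ) : fib (2 * r) = ∑ k ∈ range r, fib (2 * k + 1) := by
  induction r with
  | zero => simp
  | succ r ih => rw [sum_range_succ, ← ih, show 2 * (r + 1) = 2 * r + 2 by ring, fib_add_two]

open Nat in
theorem fib_two_mul_add_one_eq_sum (m : ℕ) :
    fib (2 * m + 1) = ∑ k ∈ range (m + 1), fib (2 * k) + 1 := by
  induction m with
  | zero => simp
  | succ m ih =>
    rw [sum_range_succ, add_right_comm, ← ih, show 2 * (m + 1) + 1 = 2 * m + 1 + 2 by ring,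
      fib_add_two, show 2 * (m + 1) = 2 * m + 1 + 1 by ring, fib_add_two (n := 2 * m)]

theorem Fin.sum_Iic_eq_sum_range {M : Type*} [AddCommMonoid M] {n : ℕ} (m : Fin n) (f : ℕ → M) :
    ∑ r ∈ Iic m, f r = ∑ k ∈ range (m + 1), f k := by
  rw [Nat.range_succ_eq_Iic, ← Fin.map_valEmbedding_Iic, sum_map]; rfl

theorem Fin.sum_Iio_eq_sum_range {M : Type*} [AddCommMonoid M] {n : ℕ} (m : Fin n) (f : ℕ → M) :
    ∑ r ∈ Iio m, f r = ∑ k ∈ range m, f k := by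
  rw [← Nat.Iio_eq_range, ← Fin.map_valEmbedding_Iio, sum_map]; rfl

theorem card_colPaths_eq_fib {n : ℕ} (m : Fin n) : #(colPaths n m) = Nat.fib (2 * m + 1) := by
  induction m using WellFoundedLT.induction with
  | _ m ih =>
    have hrow : ∀ r ∈ Iic m,
        #(rowPaths n r) = Nat.fib (2 * r) + if (r : ℕ) = 0 then 1 else 0 := by
      intro r hr
      by_cases h0 : (r : ℕ) = 0
      · simp [card_rowPaths_of_val_eq_zero h0, h0]
      · rw [card_rowPaths h0, if_neg h0, add_zero, fib_two_mul_eq_sum,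
          ← Fin.sum_Iio_eq_sum_range,
          sum_congr rfl fun c hc => ih c ((mem_Iio.mp hc).trans_le (mem_Iic.mp hr))]
    rw [card_colPaths, sum_congr rfl hrow,
      Fin.sum_Iic_eq_sum_range m (fun k => Nat.fib (2 * k) + if k = 0 then 1 else 0),
      sum_add_distrib, sum_ite_eq' (range _) 0 (fun _ => 1), if_pos (by simp),
      fib_two_mul_add_one_eq_sum]

theorem countReal_h0 (n : ℕ) : countReal n (h0dA n) (h0dB n) = 1 := by
  rw [countReal_eq_card_realizations, realizations_h0, card_singleton]

theorem countReal_h1 {n : ℕ} (hn : 1 ≤ n) :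
    countReal n (h1dA n) (h1dB n) = Nat.fib (2 * n - 1) := by
  rw [countReal_eq_card_realizations, show h1dB n = colDefectB n ⟨n - 1, by omega⟩ from rfl,
    ← colPaths, card_colPaths_eq_fib]
  congr 1
  simp only
  omega

open Real goldenRatio

theorem fib_succ_le_goldenRatio_pow (k : ℕ) : (Nat.fib (k + 1) : ℝ) ≤ φ ^ k := by
  rw [← fib_succ_sub_goldenConj_mul_fib]
  nlinarith [goldenConj_neg, (Nat.fib k).cast_nonneg (α := ℝ)]

theorem goldenRatio_pow_le_two_mul_fib_succ (k : ℕ) : φ ^ k ≤ 2 * Nat.fib (k + 1) := by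
  have hmono : (Nat.fib k : ℝ) ≤ Nat.fib (k + 1) := by exact_mod_cast Nat.fib_le_fib_succ
  rw [← fib_succ_sub_goldenConj_mul_fib]
  nlinarith [neg_one_lt_goldenConj, (Nat.fib k).cast_nonneg (α := ℝ)]

theorem fib_two_mul_sub_one_mem_Icc {n : ℕ} (hn : 1 ≤ n) :
    (Nat.fib (2 * n - 1) : ℝ) ∈
      Set.Icc (1 / (2 * φ ^ 2) * φ ^ (2 * n)) (1 / φ ^ 2 * φ ^ (2 * n)) := by
  obtain ⟨k, rfl⟩ : ∃ k, n = k + 1 := ⟨n - 1, by omega⟩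
  have hφ : φ ^ (2 * (k + 1)) = φ ^ 2 * φ ^ (2 * k) := by ring
  rw [show 2 * (k + 1) - 1 = 2 * k + 1 by omega, hφ]
  constructor
  · have := goldenRatio_pow_le_two_mul_fib_succ (2 * k)
    calc 1 / (2 * φ ^ 2) * (φ ^ 2 * φ ^ (2 * k)) = φ ^ (2 * k) / 2 := by field_simp
      _ ≤ Nat.fib (2 * k + 1) := by linarith
  · calc (Nat.fib (2 * k + 1) : ℝ) ≤ φ ^ (2 * k) := fib_succ_le_goldenRatio_pow _
      _ = 1 / φ ^ 2 * (φ ^ 2 * φ ^ (2 * k)) := by field_simp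

theorem exists_mul_pow_lt_mul_pow {r c : ℝ} (hr : 1 < r) (hc : 0 < c) (C : ℝ) (m : ℕ) :
    ∃ n : ℕ, 1 ≤ n ∧ C * n ^ m < c * r ^ n := by
  have hlim := (tendsto_pow_const_div_const_pow_of_one_lt m hr).const_mul C
  rw [mul_zero] at hlim
  obtain ⟨n, hn, hlt⟩ :=
    ((hlim.eventually (gt_mem_nhds hc)).and (Filter.eventually_ge_atTop 1)).exists.imp
      fun n h => And.intro h.2 h.1
  refine ⟨n, hn, ?_⟩
  rwa [← mul_div_assoc, div_lt_iff₀ (by positivity)] at hlt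

/-- The class `H₀ = {h₀(n)}` is not `P`-stable: `h₀(n)` has exactly one
realization, while `h₀(n) - 𝟙_{a₁} - 𝟙_{b_n}` (at `ℓ¹`-distance `2`) has
`Θ(((1+√5)/2)^{2n})` realizations, which is superpolynomial: no polynomial
bound `C·n^m` can relate the two counts. -/
theorem stmt_15 :
    (∀ n : ℕ, countReal n (h0dA n) (h0dB n) = 1) ∧
    (∃ c C : ℝ, 0 < c ∧ c ≤ C ∧ ∀ n : ℕ, 1 ≤ n →
      c * ((1 + Real.sqrt 5) / 2) ^ (2 * n) ≤
        (countReal n (h1dA n) (h1dB n) : ℝ) ∧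
      (countReal n (h1dA n) (h1dB n) : ℝ) ≤
        C * ((1 + Real.sqrt 5) / 2) ^ (2 * n)) ∧
    ¬ ∃ C m : ℕ, ∀ n : ℕ, 1 ≤ n →
      countReal n (h1dA n) (h1dB n) ≤
        C * n ^ m * countReal n (h0dA n) (h0dB n) := by
  have hsq : 0 < φ ^ 2 := by positivity
  refine ⟨countReal_h0, ⟨1 / (2 * φ ^ 2), 1 / φ ^ 2, by positivity,
    one_div_le_one_div_of_le hsq (by linarith), fun n hn => ?_⟩, ?_⟩
  · rw [countReal_h1 hn]
    exact fib_two_mul_sub_one_mem_Icc hn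
  · rintro ⟨C, m, hpoly⟩
    obtain ⟨n, hn, hlt⟩ := exists_mul_pow_lt_mul_pow (one_lt_pow₀ one_lt_goldenRatio two_ne_zero)
      (by positivity : 0 < 1 / (2 * φ ^ 2)) C m
    have hupper : (countReal n (h1dA n) (h1dB n) : ℝ) ≤ C * n ^ m := by
      exact_mod_cast (countReal_h0 n ▸ hpoly n hn).trans_eq (mul_one _)
    have hlower := (fib_two_mul_sub_one_mem_Icc hn).1
    rw [← countReal_h1 hn, pow_mul] at hlower
    linarith
end
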